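/- arXiv:1501.00085 — 6 statements merged into one kernel-verified Lean document; each statement's English description precedes it below -/
import Mathlib

section
/- Let Γ be a full-rank lattice in ℝ² such that the first coordinate projection p₁ and second coordinate projection p₂ are both injective on Γ. If γ₁, γ₂, γ₃ are three distinct points of Γ whose first coordinates all lie in a common arithmetic progression P = {a + k·d : k ∈ ℤ} (with d ≠ 0), then γ₁, γ₂, γ₃ are collinear, and the line through them is not parallel to the x-axis. -/
/-!
Differences of lattice points are lattice points, and `p₁` is injective on the lattice. If the
first coordinates of `γ₂ - γ₁` and `γ₃ - γ₁` are `k d` and `l d`, then `l (γ₂ - γ₁) - k (γ₃ - γ₁)`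
is a lattice point with first coordinate `0`, hence is `0`; since `γ₁ ≠ γ₂` forces `k ≠ 0`, this
puts `γ₃` on the line through `γ₁` and `γ₂`. The second coordinates are pairwise distinct because
`p₂` is injective on the lattice.
-/

theorem zsmul_eq_zsmul_of_injOn {V W : Type*} [AddCommGroup V] [AddCommGroup W]
    {G : AddSubgroup V} {f : V →+ W} (hf : Set.InjOn f G) {u v : V} (hu : u ∈ G) (hv : v ∈ G)
    {c : W} {k l : ℤ} (hfu : f u = k • c) (hfv : f v = l • c) : l • u = k • v := by
  have hmem : l • u - k • v ∈ G := G.sub_mem (G.zsmul_mem hu l) (G.zsmul_mem hv k)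
  have hf0 : f (l • u - k • v) = f 0 := by
    rw [map_sub, map_zsmul, map_zsmul, hfu, hfv, smul_smul, smul_smul, mul_comm, sub_self,
      map_zero]
  exact sub_eq_zero.mp (hf hmem G.zero_mem hf0)

theorem collinear_of_smul_sub_eq_smul_sub {K V : Type*} [DivisionRing K] [AddCommGroup V]
    [Module K V] {x y z : V} {k l : K} (hk : k ≠ 0) (h : l • (y - x) = k • (z - x)) :
    Collinear K ({x, y, z} : Set V) := by
  have hz : z = (k⁻¹ * l) • (y - x) + x := by
    rw [mul_smul, h, inv_smul_smul₀ hk, sub_add_cancel]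
  rw [Set.pair_comm y z, Set.insert_comm x z, hz]
  exact collinear_insert_of_mem_affineSpan_pair (smul_vsub_vadd_mem_affineSpan_pair _ _ _)

theorem collinear_of_injOn_of_map_eq_add_zsmul {K V W : Type*} [DivisionRing K] [CharZero K]
    [AddCommGroup V] [Module K V] [AddCommGroup W]
    {G : AddSubgroup V} {f : V →+ W} (hf : Set.InjOn f G) {x y z : V}
    (hx : x ∈ G) (hy : y ∈ G) (hz : z ∈ G) (hxy : x ≠ y) {a c : W} {i j k : ℤ}
    (hfx : f x = a + i • c) (hfy : f y = a + j • c) (hfz : f z = a + k • c) :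
    Collinear K ({x, y, z} : Set V) := by
  have hji : j - i ≠ 0 := by
    rintro hji
    refine hxy (hf hx hy ?_)
    rw [hfx, hfy, show j = i by omega]
  have key := zsmul_eq_zsmul_of_injOn (k := j - i) (l := k - i) hf (G.sub_mem hy hx)
    (G.sub_mem hz hx) (by rw [map_sub, hfx, hfy, sub_smul]; abel)
    (by rw [map_sub, hfx, hfz, sub_smul]; abel)
  refine collinear_of_smul_sub_eq_smul_sub (l := ((k - i : ℤ) : K)) (Int.cast_ne_zero.mpr hji) ?_
  simpa only [Int.cast_smul_eq_zsmul] using key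

def latticeImage {E : Type*} [AddCommGroup E] (T : ℝ × ℝ →+ E) : AddSubgroup E :=
  (T.comp ((Int.castAddHom ℝ).prodMap (Int.castAddHom ℝ))).range

theorem coe_latticeImage {E : Type*} [AddCommGroup E] (T : ℝ × ℝ →+ E) :
    (latticeImage T : Set E) = {p | ∃ m n : ℤ, p = T (m, n)} := by
  ext p
  constructor
  · rintro ⟨⟨m, n⟩, rfl⟩
    exact ⟨m, n, rfl⟩
  · rintro ⟨m, n, rfl⟩
    exact ⟨(m, n), rfl⟩

theorem stmt0_general (T : (ℝ × ℝ) ≃ₗ[ℝ] (ℝ × ℝ))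
    (Γ : Set (ℝ × ℝ)) (hΓ : Γ = {p | ∃ m n : ℤ, p = T (m, n)})
    (h1 : Set.InjOn Prod.fst Γ) (h2 : Set.InjOn Prod.snd Γ)
    (a d : ℝ)
    (γ₁ γ₂ γ₃ : ℝ × ℝ) (hγ₁ : γ₁ ∈ Γ) (hγ₂ : γ₂ ∈ Γ) (hγ₃ : γ₃ ∈ Γ)
    (h12 : γ₁ ≠ γ₂) (h13 : γ₁ ≠ γ₃) (h23 : γ₂ ≠ γ₃)
    (hP₁ : ∃ k : ℤ, γ₁.1 = a + k * d)
    (hP₂ : ∃ k : ℤ, γ₂.1 = a + k * d)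
    (hP₃ : ∃ k : ℤ, γ₃.1 = a + k * d) :
    Collinear ℝ ({γ₁, γ₂, γ₃} : Set (ℝ × ℝ)) ∧
      γ₁.2 ≠ γ₂.2 ∧ γ₁.2 ≠ γ₃.2 ∧ γ₂.2 ≠ γ₃.2 := by
  obtain rfl : Γ = latticeImage (T : ℝ × ℝ →+ ℝ × ℝ) :=
    hΓ.trans (coe_latticeImage (T : ℝ × ℝ →+ ℝ × ℝ)).symm
  obtain ⟨i, hi⟩ := hP₁
  obtain ⟨j, hj⟩ := hP₂
  obtain ⟨k, hk⟩ := hP₃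
  refine ⟨collinear_of_injOn_of_map_eq_add_zsmul (f := AddMonoidHom.fst ℝ ℝ) h1 hγ₁ hγ₂ hγ₃ h12
    (a := a) (c := d) (i := i) (j := j) (k := k) ?_ ?_ ?_, fun h ↦ h12 (h2 hγ₁ hγ₂ h),
    fun h ↦ h13 (h2 hγ₁ hγ₃ h), fun h ↦ h23 (h2 hγ₂ hγ₃ h)⟩ <;>
  simpa only [AddMonoidHom.coe_fst, zsmul_eq_mul]

/-- Three distinct points of a full-rank lattice in ℝ² (with both
coordinate projections injective on the lattice) whose first coordinates lie in a common
arithmetic progression are collinear, on a line not parallel to the x-axis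
(their second coordinates are pairwise distinct). -/
theorem stmt0 (T : (ℝ × ℝ) ≃ₗ[ℝ] (ℝ × ℝ))
    (Γ : Set (ℝ × ℝ)) (hΓ : Γ = {p | ∃ m n : ℤ, p = T (m, n)})
    (h1 : Set.InjOn Prod.fst Γ) (h2 : Set.InjOn Prod.snd Γ)
    (a d : ℝ) (hd : d ≠ 0)
    (γ₁ γ₂ γ₃ : ℝ × ℝ) (hγ₁ : γ₁ ∈ Γ) (hγ₂ : γ₂ ∈ Γ) (hγ₃ : γ₃ ∈ Γ)
    (h12 : γ₁ ≠ γ₂) (h13 : γ₁ ≠ γ₃) (h23 : γ₂ ≠ γ₃)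
    (hP₁ : ∃ k : ℤ, γ₁.1 = a + k * d)
    (hP₂ : ∃ k : ℤ, γ₂.1 = a + k * d)
    (hP₃ : ∃ k : ℤ, γ₃.1 = a + k * d) :
    Collinear ℝ ({γ₁, γ₂, γ₃} : Set (ℝ × ℝ)) ∧
      γ₁.2 ≠ γ₂.2 ∧ γ₁.2 ≠ γ₃.2 ∧ γ₂.2 ≠ γ₃.2 :=
  stmt0_general T Γ hΓ h1 h2 a d γ₁ γ₂ γ₃ hγ₁ hγ₂ hγ₃ h12 h13 h23 hP₁ hP₂ hP₃
end

section
/- Let Γ ⊂ ℝ² be a full-rank lattice such that p₂(x,y) = y is injective on Γ and p₂(Γ) is dense in ℝ. Let φ : ℝ → ℂ be a Schwartz function, not identically zero, and let Γ₀ = {(x,y) ∈ Γ : φ̂(y) ≠ 0} where φ̂ is the Fourier transform of φ. If Γ₀ is contained in a finite union of straight lines in ℝ², then the closure of p₂(Γ₀) equals supp(φ̂), yielding a contradiction when supp(φ̂) is not a discrete closed set; consequently, if supp(φ̂) contains an interval, then Γ₀ is not contained in any finite union of straight lines. -/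
/-!
Since `p₂(Γ)` is dense and `φ̂` is continuous, `p₂(Γ₀) = p₂(Γ) ∩ {φ̂ ≠ 0}` is dense in the open
set `{φ̂ ≠ 0}`, so its closure is `supp φ̂`. On the other hand `Γ` is closed and countable, and
`p₂` restricted to a line is either constant or an affine homeomorphism onto `ℝ`; hence if `Γ₀`
lies on finitely many lines, `p₂(Γ₀)` lies in a closed countable set, which cannot contain an
interval.
-/

open FourierTransform Set Function

theorem Dense.closure_inter_support_eq_tsupport {X M : Type*} [TopologicalSpace X]
    [TopologicalSpace M] [Zero M] [T1Space M] {s : Set X} {f : X → M} (hs : Dense s)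
    (hf : Continuous f) : closure (s ∩ support f) = tsupport f :=
  (closure_mono inter_subset_right).antisymm <| closure_minimal
    (inter_comm s _ ▸ hs.open_subset_closure_inter hf.isOpen_support) isClosed_closure

theorem isClosed_image_snd_inter_line {C : Set (ℝ × ℝ)} (hC : IsClosed C) (q v : ℝ × ℝ) :
    IsClosed (Prod.snd '' (C ∩ {p | ∃ t : ℝ, p = q + t • v})) := by
  have himage : Prod.snd '' (C ∩ {p | ∃ t : ℝ, p = q + t • v}) =
      (fun t => q.2 + t * v.2) '' {t | q + t • v ∈ C} := by
    ext y
    simp only [mem_image, mem_inter_iff, mem_ofPred_eq]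
    constructor
    · rintro ⟨_, ⟨hpC, t, rfl⟩, rfl⟩
      exact ⟨t, hpC, by simp⟩
    · rintro ⟨t, htC, rfl⟩
      exact ⟨_, ⟨htC, t, rfl⟩, by simp⟩
  have hS : IsClosed {t : ℝ | q + t • v ∈ C} := hC.preimage (by fun_prop)
  rw [himage]
  rcases eq_or_ne v.2 0 with hv | hv
  · refine Subsingleton.isClosed ?_
    rintro _ ⟨t, -, rfl⟩ _ ⟨t', -, rfl⟩
    simp [hv]
  · rw [image_eq_preimage_of_inverse (f := fun t => q.2 + t * v.2) (g := fun y => (y - q.2) / v.2)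
      (fun t => by field_simp; ring) (fun y => by field_simp; ring)]
    exact hS.preimage (by fun_prop)

theorem LinearEquiv.isClosed_image_intPoints (T : (ℝ × ℝ) ≃ₗ[ℝ] (ℝ × ℝ)) :
    IsClosed {p | ∃ m n : ℤ, p = T (m, n)} := by
  have : {p | ∃ m n : ℤ, p = T (m, n)} =
      T.symm ⁻¹' (range ((↑) : ℤ → ℝ) ×ˢ range ((↑) : ℤ → ℝ)) := by
    ext p
    simp only [mem_ofPred_eq, mem_preimage, mem_prod, mem_range]
    constructor
    · rintro ⟨m, n, rfl⟩
      simp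
    · rintro ⟨⟨m, hm⟩, ⟨n, hn⟩⟩
      exact ⟨m, n, by simp [hm, hn]⟩
  rw [this]
  exact (Real.isClosed_range_intCast.prod Real.isClosed_range_intCast).preimage
    (LinearMap.continuous_of_finiteDimensional _)

theorem LinearEquiv.countable_image_intPoints (T : (ℝ × ℝ) ≃ₗ[ℝ] (ℝ × ℝ)) :
    Set.Countable {p | ∃ m n : ℤ, p = T (m, n)} := by
  have : {p | ∃ m n : ℤ, p = T (m, n)} = range (fun z : ℤ × ℤ => T (z.1, z.2)) := by
    ext p; simp [eq_comm]
  exact this ▸ countable_range _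

theorem stmt6_general (T : (ℝ × ℝ) ≃ₗ[ℝ] (ℝ × ℝ))
    (Γ : Set (ℝ × ℝ)) (hΓ : Γ = {p | ∃ m n : ℤ, p = T (m, n)})
    (hdense : Dense (Prod.snd '' Γ))
    (φ : SchwartzMap ℝ ℂ)
    (Γ₀ : Set (ℝ × ℝ)) (hΓ₀ : Γ₀ = {p ∈ Γ | 𝓕 (⇑φ) p.2 ≠ 0}) :
    (∀ (N : ℕ) (q v : Fin N → ℝ × ℝ), (∀ i, v i ≠ 0) →
        Γ₀ ⊆ ⋃ i, {p : ℝ × ℝ | ∃ t : ℝ, p = q i + t • v i} →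
        closure (Prod.snd '' Γ₀) = tsupport (𝓕 (⇑φ))) ∧
    ((∃ a b : ℝ, a < b ∧ Set.Ioo a b ⊆ tsupport (𝓕 (⇑φ))) →
      ¬ ∃ (N : ℕ) (q v : Fin N → ℝ × ℝ), (∀ i, v i ≠ 0) ∧
          Γ₀ ⊆ ⋃ i, {p : ℝ × ℝ | ∃ t : ℝ, p = q i + t • v i}) := by
  have himage : Prod.snd '' Γ₀ = Prod.snd '' Γ ∩ support (𝓕 ⇑φ) := by
    rw [hΓ₀, ← image_inter_preimage]
    rfl
  have hclosure : closure (Prod.snd '' Γ₀) = tsupport (𝓕 ⇑φ) := by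
    rw [himage]
    exact hdense.closure_inter_support_eq_tsupport (SchwartzMap.fourierTransformCLM ℝ φ).continuous
  refine ⟨fun _ _ _ _ _ => hclosure, ?_⟩
  rintro ⟨a, b, hab, hIoo⟩ ⟨N, q, v, -, hcover⟩
  have hΓ_closed : IsClosed Γ := hΓ ▸ T.isClosed_image_intPoints
  have hΓ_countable : Γ.Countable := hΓ ▸ T.countable_image_intPoints
  set A := ⋃ i, Prod.snd '' (Γ ∩ {p : ℝ × ℝ | ∃ t : ℝ, p = q i + t • v i})
    with hA
  have hA_closed : IsClosed A := isClosed_iUnion_of_finite fun i =>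
    isClosed_image_snd_inter_line hΓ_closed (q i) (v i)
  have hA_countable : A.Countable := (hΓ_countable.image _).mono
    (iUnion_subset fun i => image_mono inter_subset_left)
  have hΓ₀A : Prod.snd '' Γ₀ ⊆ A := by
    rw [hA, ← image_iUnion, ← inter_iUnion]
    exact image_mono (subset_inter (hΓ₀ ▸ sep_subset _ _) hcover)
  have hIooA : Ioo a b ⊆ A := calc
    Ioo a b ⊆ closure (Prod.snd '' Γ₀) := hclosure ▸ hIoo
    _ ⊆ A := closure_minimal hΓ₀A hA_closed
  exact hab.not_ge (Cardinal.Real.Ioo_countable_iff.mp (hA_countable.mono hIooA))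

/-- Let `Γ ⊂ ℝ²` be a full-rank lattice with `p₂` injective on `Γ` and
`p₂(Γ)` dense in ℝ. Let `φ` be a nonzero Schwartz function and
`Γ₀ = {(x,y) ∈ Γ : φ̂(y) ≠ 0}`. If `Γ₀` is contained in a finite union of straight lines
then the closure of `p₂(Γ₀)` equals `supp(φ̂)`; consequently, if `supp(φ̂)` contains an
open interval, `Γ₀` is not contained in any finite union of straight lines. -/
theorem stmt6 (T : (ℝ × ℝ) ≃ₗ[ℝ] (ℝ × ℝ))
    (Γ : Set (ℝ × ℝ)) (hΓ : Γ = {p | ∃ m n : ℤ, p = T (m, n)})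
    (h2 : Set.InjOn Prod.snd Γ) (hdense : Dense (Prod.snd '' Γ))
    (φ : SchwartzMap ℝ ℂ) (hφ : ∃ x, φ x ≠ 0)
    (Γ₀ : Set (ℝ × ℝ)) (hΓ₀ : Γ₀ = {p ∈ Γ | 𝓕 (⇑φ) p.2 ≠ 0}) :
    (∀ (N : ℕ) (q v : Fin N → ℝ × ℝ), (∀ i, v i ≠ 0) →
        Γ₀ ⊆ ⋃ i, {p : ℝ × ℝ | ∃ t : ℝ, p = q i + t • v i} →
        closure (Prod.snd '' Γ₀) = tsupport (𝓕 (⇑φ))) ∧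
    ((∃ a b : ℝ, a < b ∧ Set.Ioo a b ⊆ tsupport (𝓕 (⇑φ))) →
      ¬ ∃ (N : ℕ) (q v : Fin N → ℝ × ℝ), (∀ i, v i ≠ 0) ∧
          Γ₀ ⊆ ⋃ i, {p : ℝ × ℝ | ∃ t : ℝ, p = q i + t • v i}) :=
  stmt6_general T Γ hΓ hdense φ Γ₀ hΓ₀
end

section
/- Let Γ ⊂ ℝ² be a full-rank lattice on which p₂(x,y) = y is injective, and let L ⊂ ℝ² be a finite union of straight lines. Then the set {p₂(γ) : γ ∈ Γ ∩ L} is a discrete closed subset of ℝ (has finitely many points in every bounded interval). -/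
open Set

lemma latt_inter_bounded_finite (T : (ℝ × ℝ) ≃ₗ[ℝ] (ℝ × ℝ)) (K : Set (ℝ × ℝ))
    (hK : Bornology.IsBounded K) :
    ({p : ℝ × ℝ | ∃ m n : ℤ, p = T (m, n)} ∩ K).Finite := by
  have hb : Bornology.IsBounded (T.symm '' K) := by
    have := (LinearMap.toContinuousLinearMap T.symm.toLinearMap).lipschitz.isBounded_image hK
    simpa using this
  obtain ⟨C, hC⟩ := (isBounded_iff_forall_norm_le).1 hb
  set M : ℤ := ⌈C⌉
  apply Set.Finite.subset
    (Set.Finite.image (fun mn : ℤ × ℤ => T ((mn.1 : ℝ), (mn.2 : ℝ)))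
      (Set.finite_Icc ((-M, -M) : ℤ × ℤ) (M, M)))
  rintro p ⟨⟨m, n, rfl⟩, hpK⟩
  refine ⟨(m, n), ?_, rfl⟩
  have h1 : T.symm (T ((m : ℝ), (n : ℝ))) ∈ T.symm '' K := ⟨_, hpK, rfl⟩
  rw [T.symm_apply_apply] at h1
  have hnorm := hC _ h1
  have hm : |(m : ℝ)| ≤ C := by
    have := norm_fst_le (((m : ℝ), (n : ℝ)) : ℝ × ℝ)
    simp only [Real.norm_eq_abs] at this ⊢
    linarith
  have hn : |(n : ℝ)| ≤ C := by
    have := norm_snd_le (((m : ℝ), (n : ℝ)) : ℝ × ℝ)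
    simp only [Real.norm_eq_abs] at this ⊢
    linarith
  have hm' : |(m : ℝ)| ≤ (M : ℝ) := hm.trans (Int.le_ceil C)
  have hn' : |(n : ℝ)| ≤ (M : ℝ) := hn.trans (Int.le_ceil C)
  have hm2 : |m| ≤ M := by exact_mod_cast (by push_cast; exact hm' : ((|m| : ℤ) : ℝ) ≤ (M : ℝ))
  have hn2 : |n| ≤ M := by exact_mod_cast (by push_cast; exact hn' : ((|n| : ℤ) : ℝ) ≤ (M : ℝ))
  rw [abs_le] at hm2 hn2
  exact ⟨⟨hm2.1, hn2.1⟩, ⟨hm2.2, hn2.2⟩⟩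

lemma line_case (T : (ℝ × ℝ) ≃ₗ[ℝ] (ℝ × ℝ)) (Γ : Set (ℝ × ℝ))
    (hΓ : Γ = {p | ∃ m n : ℤ, p = T (m, n)}) (h2 : Set.InjOn Prod.snd Γ)
    (q v : ℝ × ℝ) (R : ℝ) :
    (Γ ∩ ({p : ℝ × ℝ | ∃ t : ℝ, p = q + t • v} ∩ Prod.snd ⁻¹' Set.Icc (-R) R)).Finite := by
  by_cases hv2 : v.2 = 0
  · apply Set.Subsingleton.finite
    rintro p ⟨hpΓ, ⟨t, rfl⟩, -⟩ p' ⟨hp'Γ, ⟨t', rfl⟩, -⟩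
    apply h2 hpΓ hp'Γ
    simp [hv2, Prod.snd_add, Prod.smul_snd]
  · subst hΓ
    apply latt_inter_bounded_finite
    rw [isBounded_iff_forall_norm_le]
    refine ⟨‖q‖ + ((R + |q.2|) / |v.2|) * ‖v‖, ?_⟩
    rintro p ⟨⟨t, rfl⟩, hp2⟩
    have hps : (q + t • v).2 = q.2 + t * v.2 := rfl
    simp only [Set.mem_preimage, Set.mem_Icc, hps] at hp2
    have habs : |q.2 + t * v.2| ≤ R := abs_le.2 ⟨by linarith [hp2.1], hp2.2⟩
    have htv : |t * v.2| ≤ R + |q.2| := by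
      have : |t * v.2| = |q.2 + t * v.2 - q.2| := by ring_nf
      rw [this]
      calc |q.2 + t * v.2 - q.2| ≤ |q.2 + t * v.2| + |q.2| := abs_sub _ _
        _ ≤ R + |q.2| := by linarith
    have ht : |t| ≤ (R + |q.2|) / |v.2| := by
      rw [le_div_iff₀ (abs_pos.2 hv2)]
      rw [abs_mul] at htv
      exact htv
    calc ‖q + t • v‖ ≤ ‖q‖ + ‖t • v‖ := norm_add_le _ _
      _ = ‖q‖ + |t| * ‖v‖ := by rw [norm_smul, Real.norm_eq_abs]
      _ ≤ ‖q‖ + ((R + |q.2|) / |v.2|) * ‖v‖ := by gcongr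

/-- If `Γ ⊂ ℝ²` is a full-rank lattice on which `p₂` is injective and
`L` is a finite union of straight lines, then `p₂(Γ ∩ L)` is a discrete closed subset
of ℝ: it has finitely many points in every bounded interval. -/
theorem stmt7 (T : (ℝ × ℝ) ≃ₗ[ℝ] (ℝ × ℝ))
    (Γ : Set (ℝ × ℝ)) (hΓ : Γ = {p | ∃ m n : ℤ, p = T (m, n)})
    (h2 : Set.InjOn Prod.snd Γ)
    (N : ℕ) (q v : Fin N → ℝ × ℝ) (hv : ∀ i, v i ≠ 0)
    (L : Set (ℝ × ℝ)) (hL : L = ⋃ i, {p : ℝ × ℝ | ∃ t : ℝ, p = q i + t • v i}) :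
    ∀ R : ℝ, 0 < R → (Prod.snd '' (Γ ∩ L) ∩ Set.Icc (-R) R).Finite := by
  intro R hR
  rw [← Set.image_inter_preimage]
  apply Set.Finite.image
  have hsub : Γ ∩ L ∩ Prod.snd ⁻¹' Set.Icc (-R) R ⊆
      ⋃ i, (Γ ∩ ({p : ℝ × ℝ | ∃ t : ℝ, p = q i + t • v i} ∩ Prod.snd ⁻¹' Set.Icc (-R) R)) := by
    rintro p ⟨⟨hpΓ, hpL⟩, hpI⟩
    rw [hL] at hpL
    obtain ⟨s, ⟨i, rfl⟩, hps⟩ := hpL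
    exact Set.mem_iUnion.2 ⟨i, hpΓ, hps, hpI⟩
  exact Set.Finite.subset
    (Set.finite_iUnion fun i => line_case T Γ hΓ h2 (q i) (v i) R) hsub
end

section
/- Let Γ ⊂ ℝ² be a full-rank lattice with p₁ injective on Γ. Given increasing positive sequences (h_n) → ∞ and (a_n) with a₀ = 0, suppose for each n ≥ 1 that a_n ≥ n·(a_{n-1} + h_{n+1} + n). Then every straight line in ℝ² not parallel to the x-axis intersects A = ⋃_{n≥1} {(x,y) : |x| ≥ a_{n-1}, |y| ≤ h_n} in a bounded set. -/
/-- If `a_n ≥ n (a_{n-1} + h_{n+1} + n)` for all `n ≥ 1` (with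
`a₀ = 0`, `(h_n)` increasing, positive and tending to ∞), then every straight line not
parallel to the x-axis (parametrized as `{(c + u·t, t) : t ∈ ℝ}`) meets
`A = ⋃_{n≥1} {(x,y) : |x| ≥ a_{n-1}, |y| ≤ h_n}` in a bounded set.
Indexing: Lean index `n` is the paper's `n+1`, so `h (n+1)` is the paper's `h_{n+1}`. -/
theorem stmt15 (a h : ℕ → ℝ) (ha0 : a 0 = 0)
    (hh : ∀ n : ℕ, 0 < h (n + 1) ∧ h (n + 1) < h (n + 2))
    (hhTop : Filter.Tendsto h Filter.atTop Filter.atTop)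
    (hgrow : ∀ n : ℕ, ((n : ℝ) + 1) * (a n + h (n + 2) + ((n : ℝ) + 1)) ≤ a (n + 1))
    (A : Set (ℝ × ℝ))
    (hA : A = ⋃ n : ℕ, {p : ℝ × ℝ | a n ≤ |p.1| ∧ |p.2| ≤ h (n + 1)}) :
    ∀ c u : ℝ,
      Bornology.IsBounded (A ∩ {p : ℝ × ℝ | p.1 = c + u * p.2}) := by
  intro c u
  subst hA
  have hpos : ∀ n, 0 < h (n + 1) := fun n => (hh n).1
  have hmono : ∀ k l : ℕ, k ≤ l → h (k + 1) ≤ h (l + 1) := by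
    intro k l hkl
    induction l with
    | zero => simp [Nat.le_zero.mp hkl]
    | succ l ih =>
      rcases Nat.lt_or_ge k (l + 1) with h1 | h1
      · exact (ih (Nat.lt_succ_iff.mp h1)).trans (hh l).2.le
      · have : k = l + 1 := le_antisymm hkl h1
        simp [this]
  have hanneg : ∀ n, 0 ≤ a n := by
    intro n
    induction n with
    | zero => simp [ha0]
    | succ n ih =>
      refine le_trans ?_ (hgrow n)
      have h1 := (hpos (n + 1)).le
      have h2 : (0:ℝ) ≤ (n:ℝ) := Nat.cast_nonneg n
      nlinarith
  set N : ℕ := ⌈|u|⌉₊ + ⌈|c|⌉₊ + 1 with hNdef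
  have hNu : |u| < (N : ℝ) := by
    have h1 : ((⌈|u|⌉₊ : ℝ) + 1) ≤ N := by exact_mod_cast (by omega : ⌈|u|⌉₊ + 1 ≤ N)
    linarith [Nat.le_ceil |u|]
  have hNc : |c| < (N : ℝ) := by
    have h1 : ((⌈|c|⌉₊ : ℝ) + 1) ≤ N := by exact_mod_cast (by omega : ⌈|c|⌉₊ + 1 ≤ N)
    linarith [Nat.le_ceil |c|]
  -- key: for n ≥ N, no point of strip n lies on the line
  have hkey : ∀ n, N ≤ n → ∀ p : ℝ × ℝ,
      a n ≤ |p.1| → |p.2| ≤ h (n + 1) → p.1 = c + u * p.2 → False := by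
    intro n hn p hp1 hp2 hline
    obtain ⟨m, rfl⟩ : ∃ m, n = m + 1 := ⟨n - 1, by omega⟩
    have hmN : (N : ℝ) ≤ (m : ℝ) + 1 := by exact_mod_cast hn
    have hgrow' := hgrow m
    have ham := hanneg m
    have hpos' := hpos (m + 1)
    -- |p.1| ≤ |c| + |u| * h (m+2)
    have hx : |p.1| ≤ |c| + |u| * h (m + 2) := by
      rw [hline]
      have h1 : |c + u * p.2| ≤ |c| + |u| * |p.2| := by
        rw [← abs_mul]; exact abs_add_le _ _
      have h2 : |u| * |p.2| ≤ |u| * h (m + 2) :=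
        mul_le_mul_of_nonneg_left hp2 (abs_nonneg u)
      linarith
    have hu : |u| ≤ (m : ℝ) + 1 := le_trans hNu.le hmN
    have hc : |c| < (m : ℝ) + 1 := lt_of_lt_of_le hNc hmN
    have h1 : ((m:ℝ) + 1) * h (m + 2) + ((m:ℝ) + 1) * ((m:ℝ) + 1) ≤ a (m + 1) := by
      nlinarith
    have hm1 : (1:ℝ) ≤ (m:ℝ) + 1 := by linarith [Nat.cast_nonneg (α := ℝ) m]
    nlinarith [hp1, hx, abs_nonneg u, abs_nonneg c]
  have hN1 : 1 ≤ N := by omega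
  set H : ℝ := h N with hHdef
  set R : ℝ := |c| + |u| * H with hRdef
  have hHpos : 0 < H := by
    obtain ⟨k, hk⟩ : ∃ k, N = k + 1 := ⟨N - 1, by omega⟩
    rw [hHdef, hk]; exact hpos k
  refine Bornology.IsBounded.subset
    ((Metric.isBounded_Icc (-R) R).prod (Metric.isBounded_Icc (-H) H)) ?_
  rintro p ⟨hp1, hp2⟩
  simp only [Set.mem_iUnion, Set.mem_setOf_eq] at hp1
  obtain ⟨n, han, hhn⟩ := hp1
  have hline : p.1 = c + u * p.2 := hp2
  have hnN : n < N := by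
    by_contra hcon
    exact hkey n (le_of_not_gt hcon) p han hhn hline
  have hy : |p.2| ≤ H := by
    refine hhn.trans ?_
    obtain ⟨k, hk⟩ : ∃ k, N = k + 1 := ⟨N - 1, by omega⟩
    rw [hHdef, hk]; exact hmono n k (by omega)
  have hx : |p.1| ≤ R := by
    rw [hline, hRdef]
    have h1 : |c + u * p.2| ≤ |c| + |u| * |p.2| := by
      rw [← abs_mul]; exact abs_add_le _ _
    have h2 : |u| * |p.2| ≤ |u| * H := mul_le_mul_of_nonneg_left hy (abs_nonneg u)
    linarith
  exact Set.mem_prod.mpr ⟨Set.mem_Icc.mpr (abs_le.mp hx), Set.mem_Icc.mpr (abs_le.mp hy)⟩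
end

section
/- Let Λ ⊂ ℝ be a set such that every straight line in ℝ² not parallel to the x-axis meets the graph set {(λ, y_λ) : λ ∈ Λ} ⊂ Γ (a full-rank lattice with both coordinate projections injective) in a bounded set, where y_λ is the unique second coordinate with (λ, y_λ) ∈ Γ. Then Λ contains only finitely many elements of any arithmetic progression {a + kd : k ∈ ℤ}, d ≠ 0. -/
/-- Let `Γ ⊂ ℝ²` be a full-rank lattice with both coordinate
projections injective on `Γ`, and `Λ ⊆ p₁(Γ)`. If every straight line not parallel to
the x-axis (of the form `{(c + u·t, t)}`) meets the graph set `{γ ∈ Γ : p₁(γ) ∈ Λ}` in a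
bounded set, then `Λ` contains only finitely many elements of any arithmetic progression
`{a + kd : k ∈ ℤ}`, `d ≠ 0`. -/
theorem stmt16 (T : (ℝ × ℝ) ≃ₗ[ℝ] (ℝ × ℝ))
    (Γ : Set (ℝ × ℝ)) (hΓ : Γ = {p | ∃ m n : ℤ, p = T (m, n)})
    (h1 : Set.InjOn Prod.fst Γ) (h2 : Set.InjOn Prod.snd Γ)
    (Λ : Set ℝ) (hΛΓ : ∀ l ∈ Λ, ∃ y : ℝ, (l, y) ∈ Γ)
    (hbdd : ∀ c u : ℝ,
      Bornology.IsBounded {p : ℝ × ℝ | p ∈ Γ ∧ p.1 ∈ Λ ∧ p.1 = c + u * p.2}) :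
    ∀ a d : ℝ, d ≠ 0 → (Λ ∩ {x : ℝ | ∃ k : ℤ, x = a + k * d}).Finite := by
  intro a d hd
  by_contra hfin
  have hS : (Λ ∩ {x : ℝ | ∃ k : ℤ, x = a + k * d}).Infinite := hfin
  set S := Λ ∩ {x : ℝ | ∃ k : ℤ, x = a + k * d} with hSdef
  -- basic facts about T and Γ
  have hmem : ∀ m n : ℤ, (T ((m : ℝ), (n : ℝ))) ∈ Γ := by
    intro m n; rw [hΓ]; exact ⟨m, n, rfl⟩
  have hfst : ∀ m n m' n' : ℤ,
      (T ((m : ℝ), (n : ℝ))).1 = (T ((m' : ℝ), (n' : ℝ))).1 → m = m' ∧ n = n' := by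
    intro m n m' n' h
    have hT := h1 (hmem m n) (hmem m' n') h
    have := T.injective hT
    rw [Prod.mk.injEq] at this
    exact ⟨by exact_mod_cast this.1, by exact_mod_cast this.2⟩
  have hadd : ∀ x y : ℝ × ℝ, (T (x + y)).1 = (T x).1 + (T y).1 := by
    intro x y; rw [map_add]; rfl
  have hsub : ∀ x y : ℝ × ℝ, (T (x - y)).1 = (T x).1 - (T y).1 := by
    intro x y; rw [map_sub]; rfl
  have hneg : ∀ x : ℝ × ℝ, (T (-x)).1 = -(T x).1 := by
    intro x; rw [map_neg]; rfl
  have hT0 : T ((0:ℝ), (0:ℝ)) = 0 := by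
    have : ((0:ℝ), (0:ℝ)) = (0 : ℝ × ℝ) := rfl
    rw [this, map_zero]
  -- the subgroup of k ∈ ℤ such that k*d is the first coordinate of a lattice point
  let K : AddSubgroup ℤ :=
  { carrier := {k | ∃ m n : ℤ, (T ((m : ℝ), (n : ℝ))).1 = k * d}
    zero_mem' := ⟨0, 0, by push_cast; rw [hT0]; simp⟩
    add_mem' := by
      rintro k k' ⟨m, n, h⟩ ⟨m', n', h'⟩
      refine ⟨m + m', n + n', ?_⟩
      have he : ((↑(m + m') : ℝ), (↑(n + n') : ℝ))
          = ((m : ℝ), (n : ℝ)) + ((m' : ℝ), (n' : ℝ)) := by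
        push_cast; rfl
      rw [he, hadd, h, h']; push_cast; ring
    neg_mem' := by
      rintro k ⟨m, n, h⟩
      refine ⟨-m, -n, ?_⟩
      have he : ((↑(-m) : ℝ), (↑(-n) : ℝ)) = -((m : ℝ), (n : ℝ)) := by push_cast; rfl
      rw [he, hneg, h]; push_cast; ring }
  obtain ⟨g, hK⟩ := Int.subgroup_cyclic K
  have hKmem : ∀ k : ℤ, k ∈ K → ∃ n' : ℤ, n' * g = k := by
    intro k hk
    rw [hK, AddSubgroup.mem_closure_singleton] at hk
    obtain ⟨n', hn'⟩ := hk
    exact ⟨n', by simpa [smul_eq_mul] using hn'⟩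
  have hgK : g ∈ K := by
    rw [hK]; exact AddSubgroup.mem_closure_singleton.2 ⟨1, one_smul _ _⟩
  obtain ⟨m₀, n₀, hm₀⟩ := hgK
  -- data for each point of S
  have hdata : ∀ x : ℝ, x ∈ S → ∃ (k m n : ℤ) (y : ℝ),
      x = a + k * d ∧ ((x, y) : ℝ × ℝ) = T ((m : ℝ), (n : ℝ)) := by
    intro x hx
    obtain ⟨hxΛ, k, hk⟩ := hx
    obtain ⟨y, hy⟩ := hΛΓ x hxΛ
    rw [hΓ] at hy
    obtain ⟨m, n, hmn⟩ := hy
    exact ⟨k, m, n, y, hk, hmn⟩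
  choose kk mm nn yy hkk hpt using hdata
  -- two distinct points of S
  obtain ⟨x₁, hx₁, x₂, hx₂, hne⟩ := hS.nontrivial
  -- differences of k's lie in K
  have hdiffK : ∀ x (hx : x ∈ S), kk x hx - kk x₁ hx₁ ∈ K := by
    intro x hx
    refine ⟨mm x hx - mm x₁ hx₁, nn x hx - nn x₁ hx₁, ?_⟩
    have he : ((↑(mm x hx - mm x₁ hx₁) : ℝ), (↑(nn x hx - nn x₁ hx₁) : ℝ))
        = ((mm x hx : ℝ), (nn x hx : ℝ)) - ((mm x₁ hx₁ : ℝ), (nn x₁ hx₁ : ℝ)) := by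
      push_cast; rfl
    rw [he, hsub, ← hpt x hx, ← hpt x₁ hx₁]
    show x - x₁ = (↑(kk x hx - kk x₁ hx₁) : ℝ) * d
    push_cast
    linear_combination hkk x hx - hkk x₁ hx₁
  -- g ≠ 0
  have hg : g ≠ 0 := by
    intro hg0
    obtain ⟨n', hn'⟩ := hKmem _ (hdiffK x₂ hx₂)
    rw [hg0, mul_zero] at hn'
    have : kk x₂ hx₂ = kk x₁ hx₁ := by omega
    apply hne
    rw [hkk x₂ hx₂, hkk x₁ hx₁, this]
  -- the direction vector
  set w : ℝ × ℝ := T ((m₀ : ℝ), (n₀ : ℝ)) with hw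
  have hw1 : w.1 = g * d := hm₀
  have hw1ne : w.1 ≠ 0 := by
    rw [hw1]; exact mul_ne_zero (Int.cast_ne_zero.2 hg) hd
  have hw2 : w.2 ≠ 0 := by
    intro h0
    have hz : T ((((0:ℤ)):ℝ), (((0:ℤ)):ℝ)) = 0 := by push_cast; exact hT0
    have hweq : w = T ((((0:ℤ)):ℝ), (((0:ℤ)):ℝ)) :=
      h2 (hmem m₀ n₀) (hmem 0 0) (by rw [hz]; exact h0)
    rw [hz] at hweq
    exact hw1ne (by rw [hweq]; rfl)
  -- every point of S lies on the line x = c + u * y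
  set u : ℝ := w.1 / w.2 with hu
  set c : ℝ := x₁ - u * yy x₁ hx₁ with hc
  have hline : ∀ x (hx : x ∈ S), x = c + u * yy x hx := by
    intro x hx
    obtain ⟨n', hn'⟩ := hKmem _ (hdiffK x hx)
    -- first coordinates agree
    have hfst_eq : (T ((↑(mm x hx - mm x₁ hx₁) : ℝ), (↑(nn x hx - nn x₁ hx₁) : ℝ))).1
        = (T ((↑(n' * m₀) : ℝ), (↑(n' * n₀) : ℝ))).1 := by
      have he1 : ((↑(mm x hx - mm x₁ hx₁) : ℝ), (↑(nn x hx - nn x₁ hx₁) : ℝ))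
          = ((mm x hx : ℝ), (nn x hx : ℝ)) - ((mm x₁ hx₁ : ℝ), (nn x₁ hx₁ : ℝ)) := by
        push_cast; rfl
      have he2 : ((↑(n' * m₀) : ℝ), (↑(n' * n₀) : ℝ))
          = (n' : ℝ) • ((m₀ : ℝ), (n₀ : ℝ)) := by
        push_cast; rfl
      rw [he1, hsub, he2, map_smul, ← hpt x hx, ← hpt x₁ hx₁]
      show x - x₁ = ((n' : ℝ) • (T ((m₀ : ℝ), (n₀ : ℝ)))).1
      have : ((n' : ℝ) • (T ((m₀ : ℝ), (n₀ : ℝ)))).1 = (n' : ℝ) * w.1 := rfl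
      rw [this, hw1]
      have hcast : ((kk x hx : ℝ) - (kk x₁ hx₁ : ℝ)) = (n' : ℝ) * (g : ℝ) := by
        exact_mod_cast hn'.symm
      linear_combination hkk x hx - hkk x₁ hx₁ + d * hcast
    obtain ⟨hm, hn⟩ := hfst _ _ _ _ hfst_eq
    -- the point equals (x₁, y₁) + n' • w
    have hpteq : ((x, yy x hx) : ℝ × ℝ) = ((x₁, yy x₁ hx₁) : ℝ × ℝ) + (n' : ℝ) • w := by
      rw [hpt x hx, hpt x₁ hx₁, hw, ← map_smul, ← map_add]
      congr 1
      have h1' : (mm x hx : ℝ) = (mm x₁ hx₁ : ℝ) + (n' : ℝ) * (m₀ : ℝ) := by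
        exact_mod_cast (by omega : mm x hx = mm x₁ hx₁ + n' * m₀)
      have h2' : (nn x hx : ℝ) = (nn x₁ hx₁ : ℝ) + (n' : ℝ) * (n₀ : ℝ) := by
        exact_mod_cast (by omega : nn x hx = nn x₁ hx₁ + n' * n₀)
      rw [Prod.ext_iff]
      constructor
      · show (mm x hx : ℝ) = (mm x₁ hx₁ : ℝ) + (n' : ℝ) * (m₀ : ℝ); exact h1'
      · show (nn x hx : ℝ) = (nn x₁ hx₁ : ℝ) + (n' : ℝ) * (n₀ : ℝ); exact h2'
    have hx' : x = x₁ + (n' : ℝ) * w.1 := congrArg Prod.fst hpteq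
    have hy' : yy x hx = yy x₁ hx₁ + (n' : ℝ) * w.2 := congrArg Prod.snd hpteq
    rw [hc, hu, hy', hx']
    field_simp
    ring
  -- all points of S give lattice points in the bounded set
  have hB := hbdd c u
  rw [Metric.isBounded_iff_subset_closedBall 0] at hB
  obtain ⟨R, hR⟩ := hB
  have hxbdd : ∀ x ∈ S, |x| ≤ R := by
    intro x hx
    have hptB : ((x, yy x hx) : ℝ × ℝ) ∈ Metric.closedBall (0 : ℝ × ℝ) R := by
      apply hR
      refine ⟨?_, hx.1, hline x hx⟩
      rw [hpt x hx]; exact hmem _ _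
    rw [Metric.mem_closedBall, dist_zero_right] at hptB
    calc |x| = ‖((x, yy x hx) : ℝ × ℝ).1‖ := rfl
      _ ≤ ‖((x, yy x hx) : ℝ × ℝ)‖ := norm_fst_le _
      _ ≤ R := hptB
  -- but then S is finite: contradiction
  set N : ℤ := ⌈(R + |a|) / |d|⌉ with hN
  have hsubset : S ⊆ (fun j : ℤ => a + j * d) '' (Set.Icc (-N) N) := by
    intro x hx
    refine ⟨kk x hx, ?_, (hkk x hx).symm⟩
    have hxb := hxbdd x hx
    have h1' : |(kk x hx : ℝ)| * |d| = |x - a| := by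
      rw [← abs_mul]; congr 1; linear_combination - hkk x hx
    have h2' : |x - a| ≤ R + |a| := by
      have h := abs_add_le x (-a)
      rw [abs_neg] at h
      have he : x + -a = x - a := by ring
      rw [he] at h
      linarith
    have hdpos : 0 < |d| := abs_pos.2 hd
    have h3' : |(kk x hx : ℝ)| ≤ (R + |a|) / |d| := by
      rw [le_div_iff₀ hdpos]; linarith [h1', h2']
    have h4' : |(kk x hx : ℝ)| ≤ (N : ℝ) := h3'.trans (Int.le_ceil _)
    have h5' : |kk x hx| ≤ N := by exact_mod_cast h4'
    exact Set.mem_Icc.2 (abs_le.mp h5')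
  exact hS ((Set.Finite.image _ (Set.finite_Icc _ _)).subset hsubset)
end

section
/- Let S ⊂ ℝ be a set that cannot be covered by finitely many straight-line 'fibers' in the following sense: S = p₁(Γ* ∩ A*) for a full-rank lattice Γ* with p₁, p₂ injective on Γ* and p₂(Γ*) dense in ℝ, where A* contains, for every R > 0, all points (x,y) ∈ ℝ² with |y| ≤ R and |x| sufficiently large. If S were covered by a finite union of arithmetic progressions, then Γ* ∩ A* would be contained in a finite union of lines, forcing p₂(Γ* ∩ A*) to be a discrete closed set; but p₂(Γ* ∩ A*) is dense in ℝ, a contradiction. Conclude: S is not contained in any finite union of arithmetic progressions. -/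
/-!
Since `p₁` is injective on the group `Γ*`, the lattice points whose first coordinate lies in
`α + δℤ` form a coset of a subgroup that `p₁` embeds into `δℤ`, hence of a cyclic subgroup;
so their second coordinates lie in one arithmetic progression. A finite union of arithmetic
progressions is closed and countable, so it cannot contain the dense set `p₂(Γ* ∩ A*)`.
-/

open Set

def arithProg (a d : ℝ) : Set ℝ := {x | ∃ k : ℤ, x = a + k * d}

lemma arithProg_eq_range (a d : ℝ) : arithProg a d = range fun k : ℤ ↦ a + k * d := by
  ext x; simp [arithProg, eq_comm]

lemma isClosed_arithProg (a d : ℝ) : IsClosed (arithProg a d) := by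
  rw [arithProg_eq_range]
  have : IsClosedMap fun x : ℝ ↦ a + x * d := by
    simpa only [Function.comp_def, Homeomorph.coe_addLeft, smul_eq_mul, mul_comm] using
      (Homeomorph.addLeft a).isClosedMap.comp (isClosedMap_smul₀ d)
  exact (this.comp Int.isClosedEmbedding_coe_real.isClosedMap).isClosed_range

lemma countable_arithProg (a d : ℝ) : (arithProg a d).Countable := by
  rw [arithProg_eq_range]
  exact countable_range _

lemma not_dense_of_subset_iUnion_arithProg {ι : Type*} [Finite ι] (a d : ι → ℝ) {s : Set ℝ}
    (hs : s ⊆ ⋃ i, arithProg (a i) (d i)) : ¬ Dense s := by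
  intro hdense
  have hclosed : IsClosed (⋃ i, arithProg (a i) (d i)) :=
    isClosed_iUnion_of_finite fun i ↦ isClosed_arithProg (a i) (d i)
  have huniv : ⋃ i, arithProg (a i) (d i) = univ :=
    eq_univ_of_univ_subset (hdense.closure_eq ▸ closure_minimal hs hclosed)
  have : Countable ι := Finite.to_countable
  exact not_countable_univ (huniv ▸ countable_iUnion fun i ↦ countable_arithProg (a i) (d i))

lemma isAddCyclic_comap_zmultiples {M : Type*} [AddGroup M] {f : M →+ ℝ}
    (hf : Function.Injective f) (d : ℝ) :
    IsAddCyclic ((AddSubgroup.zmultiples d).comap f) :=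
  isAddCyclic_of_injective (f.addSubgroupComap _) fun _ _ h ↦
    Subtype.ext (hf (congrArg Subtype.val h))

lemma exists_image_preimage_arithProg_subset {M : Type*} [AddGroup M] {f : M →+ ℝ}
    (hf : Function.Injective f) (g : M →+ ℝ) (a d : ℝ) :
    ∃ c e, g '' (f ⁻¹' arithProg a d) ⊆ arithProg c e := by
  rcases eq_empty_or_nonempty (f ⁻¹' arithProg a d) with hempty | ⟨z₀, k₀, hz₀⟩
  · exact ⟨0, 0, by simp [hempty]⟩
  obtain ⟨v, hv⟩ := (AddSubgroup.isAddCyclic_iff_exists_zmultiples_eq_top _).1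
    (isAddCyclic_comap_zmultiples hf d)
  refine ⟨g z₀, g v, ?_⟩
  rintro _ ⟨z, ⟨k, hz⟩, rfl⟩
  have hmem : z - z₀ ∈ AddSubgroup.zmultiples v := by
    rw [hv, AddSubgroup.mem_comap, map_sub, hz, hz₀]
    exact ⟨k - k₀, by push_cast; ring⟩
  obtain ⟨n, hn⟩ := hmem
  refine ⟨n, ?_⟩
  rw [← sub_add_cancel z z₀, ← hn, map_add, map_zsmul, zsmul_eq_mul]
  ring

theorem stmt17_general (T : (ℝ × ℝ) ≃ₗ[ℝ] (ℝ × ℝ))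
    (Γs : Set (ℝ × ℝ)) (hΓs : Γs = {p | ∃ m n : ℤ, p = T (m, n)})
    (h1 : Set.InjOn Prod.fst Γs)
    (As : Set (ℝ × ℝ)) (S : Set ℝ) (hS : S = Prod.fst '' (Γs ∩ As))
    (hdense : Dense (Prod.snd '' (Γs ∩ As))) :
    ¬ ∃ (N : ℕ) (α δ : Fin N → ℝ), (∀ i, δ i ≠ 0) ∧
        S ⊆ ⋃ i, {x : ℝ | ∃ k : ℤ, x = α i + k * δ i} := by
  rintro ⟨N, α, δ, -, hcov⟩
  let Γ : AddSubgroup (ℝ × ℝ) := (T.toAddMonoidHom.comp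
    ((Int.castAddHom ℝ).prodMap (Int.castAddHom ℝ))).range
  have hΓ : (Γ : Set (ℝ × ℝ)) = Γs := by
    ext p
    simp [Γ, hΓs, eq_comm]
  let f := (AddMonoidHom.fst ℝ ℝ).comp Γ.subtype
  have hf : Function.Injective f := fun p q h ↦
    Subtype.ext (h1 (hΓ ▸ p.2) (hΓ ▸ q.2) h)
  choose c e hce using fun i ↦
    exists_image_preimage_arithProg_subset hf ((AddMonoidHom.snd ℝ ℝ).comp Γ.subtype) (α i) (δ i)
  refine not_dense_of_subset_iUnion_arithProg c e ?_ hdense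
  rintro _ ⟨p, ⟨hpΓ, hpA⟩, rfl⟩
  have hpS : p.1 ∈ S := hS ▸ mem_image_of_mem Prod.fst ⟨hpΓ, hpA⟩
  obtain ⟨i, hi⟩ := mem_iUnion.1 (hcov hpS)
  exact mem_iUnion.2 ⟨i, hce i ⟨⟨p, show p ∈ (Γ : Set (ℝ × ℝ)) from hΓ ▸ hpΓ⟩, hi, rfl⟩⟩

/-- Let `Γ*` be a full-rank lattice with both coordinate projections
injective on it, let `A* ⊆ ℝ²`, and set `S = p₁(Γ* ∩ A*)`. If `p₂(Γ* ∩ A*)` is dense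
in ℝ, then `S` is not contained in any finite union of arithmetic progressions. -/
theorem stmt17 (T : (ℝ × ℝ) ≃ₗ[ℝ] (ℝ × ℝ))
    (Γs : Set (ℝ × ℝ)) (hΓs : Γs = {p | ∃ m n : ℤ, p = T (m, n)})
    (h1 : Set.InjOn Prod.fst Γs) (h2 : Set.InjOn Prod.snd Γs)
    (As : Set (ℝ × ℝ)) (S : Set ℝ) (hS : S = Prod.fst '' (Γs ∩ As))
    (hdense : Dense (Prod.snd '' (Γs ∩ As))) :
    ¬ ∃ (N : ℕ) (α δ : Fin N → ℝ), (∀ i, δ i ≠ 0) ∧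
        S ⊆ ⋃ i, {x : ℝ | ∃ k : ℤ, x = α i + k * δ i} :=
  stmt17_general T Γs hΓs h1 As S hS hdense
end
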